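/- arXiv:2602.00188 — 2 statements merged into one kernel-verified Lean document; each statement's English description precedes it below -/
import Mathlib

section
/- Let U ∈ ℝ^{N×d}, V ∈ ℝ^{d×d} symmetric positive semidefinite with u_iᵀ V u_j ≥ 0 for all i ≠ j, and α_{ij} ≥ 0 symmetric (α_{ij} = α_{ji}). With M₁ = Diag(α_{ii} u_iᵀ V u_i), M₂(i,j) = −α_{ij} u_iᵀ V u_j for i ≠ j (zero diagonal), M₃ = Diag(Σ_{j≠i} α_{ij} u_iᵀ V u_j), and weight matrix W(i,j) = α_{ij} u_iᵀ V u_j for i ≠ j (zero diagonal), the matrix M := M₁ + M₂ + M₃ is positive definite if and only if every connected component of the graph on {1,…,N} with edges {(i,j) : i ≠ j, W(i,j) > 0} contains at least one vertex i with α_{ii} u_iᵀ V u_i > 0. -/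
open Matrix

/-! Write `M = diag(c) + L`, where `c i = α i i ⟨u i, u i⟩_V` and `L = M₂ + M₃` is the Laplacian of
the similarity graph with weights `w i j = α i j ⟨u i, u j⟩_V`. Then
`xᵀ M x = ∑ c i x i² + ½ ∑ w i j (x i - x j)²`, a sum of nonnegative terms, so `xᵀ M x = 0` exactly
when `x` is constant on each connected component and vanishes wherever `c` does not. Such a nonzero
`x` exists (the indicator of a component) iff some component carries no vertex with `c j > 0`. -/

namespace Matrix

theorem IsSymm.dotProduct_mulVec_comm {n R : Type*} [Fintype n] [CommSemiring R]
    {A : Matrix n n R} (hA : A.IsSymm) (x y : n → R) : x ⬝ᵥ (A *ᵥ y) = y ⬝ᵥ (A *ᵥ x) := by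
  rw [dotProduct_mulVec, ← mulVec_transpose, hA.eq, dotProduct_comm]

variable {ι : Type*} {w : ι → ι → ℝ}

theorem weight_mul_sq_sub_nonneg (hw₀ : ∀ i j, i ≠ j → 0 ≤ w i j) (x : ι → ℝ) (i j : ι) :
    0 ≤ w i j * (x i - x j) ^ 2 := by
  rcases eq_or_ne i j with rfl | hij
  · simp
  · exact mul_nonneg (hw₀ i j hij) (sq_nonneg _)

theorem weight_mul_sq_sub_eq_zero_iff (hw₀ : ∀ i j, i ≠ j → 0 ≤ w i j) (x : ι → ℝ) (i j : ι) :
    w i j * (x i - x j) ^ 2 = 0 ↔ (i ≠ j → 0 < w i j → x i = x j) := by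
  rcases eq_or_ne i j with rfl | hij
  · simp
  · rw [mul_eq_zero, pow_eq_zero_iff two_ne_zero, sub_eq_zero, (hw₀ i j hij).lt_iff_ne',
      or_iff_not_imp_left]
    exact ⟨fun h _ => h, fun h => h hij⟩

variable [Fintype ι] [DecidableEq ι]

def weightedLaplacian (w : ι → ι → ℝ) : Matrix ι ι ℝ :=
  of fun i j => if i = j then ∑ k ∈ Finset.univ.erase i, w i k else -w i j

theorem weightedLaplacian_mulVec_apply (w : ι → ι → ℝ) (x : ι → ℝ) (i : ι) :
    (weightedLaplacian w *ᵥ x) i = ∑ j, w i j * (x i - x j) := by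
  rw [mulVec, dotProduct, ← Finset.add_sum_erase _ _ (Finset.mem_univ i),
    ← Finset.add_sum_erase _ _ (Finset.mem_univ i)]
  simp only [weightedLaplacian, of_apply, if_true, sub_self, mul_zero, zero_add]
  rw [Finset.sum_mul, ← Finset.sum_add_distrib]
  refine Finset.sum_congr rfl fun j hj => ?_
  rw [if_neg (Finset.ne_of_mem_erase hj).symm]
  ring

theorem dotProduct_weightedLaplacian_mulVec {w : ι → ι → ℝ} (hw : ∀ i j, w i j = w j i)
    (x : ι → ℝ) :
    x ⬝ᵥ (weightedLaplacian w *ᵥ x) = (∑ i, ∑ j, w i j * (x i - x j) ^ 2) / 2 := by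
  have hform : x ⬝ᵥ (weightedLaplacian w *ᵥ x) = ∑ i, ∑ j, w i j * (x i * (x i - x j)) := by
    simp only [dotProduct, weightedLaplacian_mulVec_apply, Finset.mul_sum]
    exact Fintype.sum_congr _ _ fun i => Fintype.sum_congr _ _ fun j => by ring
  have hswap : ∑ i, ∑ j, w i j * (x i * (x i - x j)) = ∑ i, ∑ j, w i j * (x j * (x j - x i)) := by
    rw [Finset.sum_comm]
    exact Fintype.sum_congr _ _ fun i => Fintype.sum_congr _ _ fun j => by rw [hw]
  have hsq : ∑ i, ∑ j, w i j * (x i - x j) ^ 2 =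
      ∑ i, ∑ j, w i j * (x i * (x i - x j)) + ∑ i, ∑ j, w i j * (x j * (x j - x i)) := by
    simp only [← Finset.sum_add_distrib]
    exact Fintype.sum_congr _ _ fun i => Fintype.sum_congr _ _ fun j => by ring
  rw [hsq, ← hswap, hform]
  ring

variable {c : ι → ℝ}

theorem dotProduct_diagonal_add_weightedLaplacian_mulVec (hw : ∀ i j, w i j = w j i)
    (x : ι → ℝ) :
    x ⬝ᵥ ((diagonal c + weightedLaplacian w) *ᵥ x) =
      ∑ i, c i * x i ^ 2 + (∑ i, ∑ j, w i j * (x i - x j) ^ 2) / 2 := by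
  rw [add_mulVec, dotProduct_add, dotProduct_weightedLaplacian_mulVec hw]
  congr 1
  simp only [dotProduct, mulVec_diagonal]
  exact Fintype.sum_congr _ _ fun i => by ring

theorem dotProduct_diagonal_add_weightedLaplacian_mulVec_nonneg (hc : ∀ i, 0 ≤ c i)
    (hw₀ : ∀ i j, i ≠ j → 0 ≤ w i j) (hw : ∀ i j, w i j = w j i) (x : ι → ℝ) :
    0 ≤ x ⬝ᵥ ((diagonal c + weightedLaplacian w) *ᵥ x) := by
  rw [dotProduct_diagonal_add_weightedLaplacian_mulVec hw]
  have hcx := Finset.sum_nonneg fun i (_ : i ∈ Finset.univ) => mul_nonneg (hc i) (sq_nonneg (x i))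
  have hwx := Finset.sum_nonneg fun i (_ : i ∈ Finset.univ) =>
    Finset.sum_nonneg fun j (_ : j ∈ Finset.univ) => weight_mul_sq_sub_nonneg hw₀ x i j
  exact add_nonneg hcx (div_nonneg hwx zero_le_two)

theorem dotProduct_diagonal_add_weightedLaplacian_mulVec_eq_zero_iff (hc : ∀ i, 0 ≤ c i)
    (hw₀ : ∀ i j, i ≠ j → 0 ≤ w i j) (hw : ∀ i j, w i j = w j i) (x : ι → ℝ) :
    x ⬝ᵥ ((diagonal c + weightedLaplacian w) *ᵥ x) = 0 ↔
      (∀ i, c i = 0 ∨ x i = 0) ∧ ∀ i j, i ≠ j → 0 < w i j → x i = x j := by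
  have hcx i : 0 ≤ c i * x i ^ 2 := mul_nonneg (hc i) (sq_nonneg (x i))
  have hwx := weight_mul_sq_sub_nonneg hw₀ x
  rw [dotProduct_diagonal_add_weightedLaplacian_mulVec hw,
    add_eq_zero_iff_of_nonneg (Finset.sum_nonneg fun i _ => hcx i)
      (div_nonneg (Finset.sum_nonneg fun i _ => Finset.sum_nonneg fun j _ => hwx i j) zero_le_two),
    div_eq_zero_iff, or_iff_left two_ne_zero, Fintype.sum_eq_zero_iff_of_nonneg hcx,
    Fintype.sum_eq_zero_iff_of_nonneg fun i => Finset.sum_nonneg fun j _ => hwx i j]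
  simp only [funext_iff, Pi.zero_apply, mul_eq_zero, pow_eq_zero_iff two_ne_zero]
  refine and_congr_right' (forall_congr' fun i => ?_)
  rw [Fintype.sum_eq_zero_iff_of_nonneg (hwx i)]
  simp only [funext_iff, Pi.zero_apply, weight_mul_sq_sub_eq_zero_iff hw₀]

theorem posDef_diagonal_add_weightedLaplacian_iff (hc : ∀ i, 0 ≤ c i)
    (hw₀ : ∀ i j, i ≠ j → 0 ≤ w i j) (hw : ∀ i j, w i j = w j i) :
    (∀ x : ι → ℝ, x ≠ 0 → 0 < x ⬝ᵥ ((diagonal c + weightedLaplacian w) *ᵥ x)) ↔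
      ∀ i, ∃ j, Relation.ReflTransGen (fun a b => a ≠ b ∧ 0 < w a b) i j ∧ 0 < c j := by
  simp only [fun x =>
      (dotProduct_diagonal_add_weightedLaplacian_mulVec_nonneg hc hw₀ hw x).lt_iff_ne', ne_eq,
    dotProduct_diagonal_add_weightedLaplacian_mulVec_eq_zero_iff hc hw₀ hw]
  constructor
  · intro hpos i
    by_contra! hdead
    classical
    refine hpos (fun k => if Relation.ReflTransGen (fun a b => a ≠ b ∧ 0 < w a b) i k then 1 else 0)
      (fun h => by simpa [Relation.ReflTransGen.refl] using congrFun h i)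
      ⟨fun k => ?_, fun a b hab hab' => ?_⟩
    · split_ifs with hk
      exacts [.inl ((hdead k hk).antisymm (hc k)), .inr rfl]
    · have hiff : Relation.ReflTransGen (fun a b => a ≠ b ∧ 0 < w a b) i a ↔
          Relation.ReflTransGen (fun a b => a ≠ b ∧ 0 < w a b) i b :=
        ⟨fun h => h.tail ⟨hab, hab'⟩, fun h => h.tail ⟨Ne.symm hab, hw a b ▸ hab'⟩⟩
      simp only [hiff]
  · rintro hcomp x hx ⟨hzero, hconst⟩
    obtain ⟨i, hi⟩ := Function.ne_iff.mp hx
    have hxreach {j} (hij : Relation.ReflTransGen (fun a b => a ≠ b ∧ 0 < w a b) i j) :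
        x i = x j := by
      induction hij with
      | refl => rfl
      | tail _ hstep ih => exact ih.trans (hconst _ _ hstep.1 hstep.2)
    obtain ⟨j, hij, hcj⟩ := hcomp i
    exact hi ((hxreach hij).trans ((hzero j).resolve_left hcj.ne'))

end Matrix

/-- `M = M₁ + M₂ + M₃` is positive definite (i.e. `xᵀ M x > 0` for all
`x ≠ 0`) if and only if every connected component of the similarity graph
(edges: `i ≠ j` with `α i j * ⟨u i, u j⟩_V > 0`) contains a vertex `j` with
`α j j * ⟨u j, u j⟩_V > 0`. -/
theorem attributeElasticity_posDef_iff_component_condition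
    (N d : ℕ) (U : Matrix (Fin N) (Fin d) ℝ)
    (V : Matrix (Fin d) (Fin d) ℝ) (hV : V.PosSemidef)
    (hVcross : ∀ i j, i ≠ j → 0 ≤ U i ⬝ᵥ V.mulVec (U j))
    (α : Fin N → Fin N → ℝ) (hα : ∀ i j, 0 ≤ α i j)
    (hαsymm : ∀ i j, α i j = α j i)
    (M₁ M₂ M₃ : Matrix (Fin N) (Fin N) ℝ)
    (hM₁ : M₁ = Matrix.diagonal fun i => α i i * (U i ⬝ᵥ V.mulVec (U i)))
    (hM₂ : ∀ i j, M₂ i j = if i = j then 0 else -(α i j * (U i ⬝ᵥ V.mulVec (U j))))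
    (hM₃ : M₃ = Matrix.diagonal fun i =>
      ∑ j ∈ Finset.univ.erase i, α i j * (U i ⬝ᵥ V.mulVec (U j))) :
    (∀ x : Fin N → ℝ, x ≠ 0 → 0 < x ⬝ᵥ (M₁ + M₂ + M₃).mulVec x) ↔
      (∀ i : Fin N, ∃ j : Fin N,
        Relation.ReflTransGen
          (fun a b => a ≠ b ∧ 0 < α a b * (U a ⬝ᵥ V.mulVec (U b))) i j ∧
        0 < α j j * (U j ⬝ᵥ V.mulVec (U j))) := by
  have hM : M₁ + M₂ + M₃ = diagonal (fun i => α i i * (U i ⬝ᵥ V *ᵥ U i)) +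
      weightedLaplacian (fun i j => α i j * (U i ⬝ᵥ V *ᵥ U j)) := by
    rw [hM₁, add_assoc]
    congr 1
    ext i j
    rcases eq_or_ne i j with rfl | hij
    · simp [hM₂, hM₃, weightedLaplacian]
    · simp [hM₂, hM₃, weightedLaplacian, hij]
  have hVsymm : V.IsSymm := isHermitian_iff_isSymm.mp hV.1
  rw [hM]
  exact posDef_diagonal_add_weightedLaplacian_iff
    (fun i => mul_nonneg (hα i i) (by simpa using hV.dotProduct_mulVec_nonneg (U i)))
    (fun i j hij => mul_nonneg (hα i j) (hVcross i j hij))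
    (fun i j => by rw [hαsymm, hVsymm.dotProduct_mulVec_comm])
end

section
/- Let N be a positive integer, let W ∈ ℝ^{N×N} be symmetric with zero diagonal and nonnegative entries, with Laplacian L := Diag(W𝟙) − W, and let D be a diagonal matrix with nonnegative diagonal entries. Then M := D + L is positive definite if and only if for every vertex i ∈ {1,…,N} there exists a vertex j with D(j,j) > 0 such that j is reachable from i in the graph on {1,…,N} whose edges are the pairs (k,l), k ≠ l, with W(k,l) > 0. -/
open Matrix BigOperators

lemma quad_form_eq (N : ℕ) (D : Fin N → ℝ) (W : Matrix (Fin N) (Fin N) ℝ)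
    (hWsymm : W.IsSymm) (x : Fin N → ℝ) :
    x ⬝ᵥ (Matrix.diagonal D + (Matrix.diagonal (fun i => ∑ j, W i j) - W)).mulVec x
      = ∑ i, D i * x i ^ 2 + (1/2) * ∑ i, ∑ j, W i j * (x i - x j) ^ 2 := by
  have step1 : x ⬝ᵥ (Matrix.diagonal D + (Matrix.diagonal (fun i => ∑ j, W i j) - W)).mulVec x
      = ∑ i, D i * x i ^ 2 + (∑ i, ∑ j, W i j * x i ^ 2 - ∑ i, ∑ j, W i j * (x i * x j)) := by
    simp only [dotProduct, mulVec, Matrix.add_apply, Matrix.sub_apply, dotProduct,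
      Matrix.diagonal_apply, Finset.sum_mul, Finset.mul_sum]
    have h : ∀ i : Fin N, ∑ j, x i * (((if i = j then D i else 0)
        + ((if i = j then ∑ k, W i k else 0) - W i j)) * x j)
        = D i * x i ^ 2 + (∑ j, W i j * x i ^ 2 - ∑ j, W i j * (x i * x j)) := by
      intro i
      have : ∀ j : Fin N, x i * (((if i = j then D i else 0)
          + ((if i = j then ∑ k, W i k else 0) - W i j)) * x j)
          = (if i = j then D i * x i ^ 2 else 0)
            + ((if i = j then (∑ k, W i k) * x i ^ 2 else 0) - W i j * (x i * x j)) := by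
        intro j; split <;> rename_i hij
        · subst hij; ring
        · ring
      simp only [this, Finset.sum_add_distrib, Finset.sum_sub_distrib, Finset.sum_ite_eq,
        Finset.mem_univ, if_true, Finset.sum_mul]
    simp only [h, Finset.sum_add_distrib, Finset.sum_sub_distrib]
  have hswap : ∑ i, ∑ j, W i j * x j ^ 2 = ∑ i, ∑ j, W i j * x i ^ 2 := by
    rw [Finset.sum_comm]
    refine Finset.sum_congr rfl fun j _ => Finset.sum_congr rfl fun i _ => ?_
    rw [hWsymm.apply j i]
  have expand : ∑ i, ∑ j, W i j * (x i - x j) ^ 2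
      = ∑ i, ∑ j, W i j * x i ^ 2 + ∑ i, ∑ j, W i j * x j ^ 2
        - 2 * ∑ i, ∑ j, W i j * (x i * x j) := by
    simp only [← Finset.sum_add_distrib, ← Finset.sum_sub_distrib, Finset.mul_sum]
    refine Finset.sum_congr rfl fun i _ => ?_
    refine Finset.sum_congr rfl fun j _ => ?_
    ring
  rw [step1, expand, hswap]; ring

lemma chain_ne_edge {N : ℕ} {W : Matrix (Fin N) (Fin N) ℝ} {x : Fin N → ℝ} {i j : Fin N}
    (h : Relation.ReflTransGen (fun k l => k ≠ l ∧ 0 < W k l) i j) (hx : x i ≠ x j) :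
    ∃ k l, (k ≠ l ∧ 0 < W k l) ∧ x k ≠ x l := by
  induction h with
  | refl => exact absurd rfl hx
  | tail hab hbc ih =>
    rename_i b c
    by_cases h' : x b = x c
    · exact ih (by rw [h'] at *; exact hx)
    · exact ⟨b, c, hbc, h'⟩

/-- `M = D + L` (nonnegative diagonal `D` plus the graph Laplacian `L` of a
symmetric nonnegative `W` with zero diagonal) is positive definite
(`xᵀ M x > 0` for all `x ≠ 0`) iff from every vertex `i` some vertex `j` with
`D j > 0` is reachable through edges `{(k,l) : k ≠ l, W k l > 0}`. -/
theorem diag_plus_laplacian_posDef_iff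
    (N : ℕ) (hN : 0 < N) (W : Matrix (Fin N) (Fin N) ℝ)
    (hWsymm : W.IsSymm) (hWdiag : ∀ i, W i i = 0)
    (hWnonneg : ∀ i j, 0 ≤ W i j)
    (D : Fin N → ℝ) (hD : ∀ i, 0 ≤ D i) :
    (∀ x : Fin N → ℝ, x ≠ 0 →
        0 < x ⬝ᵥ (Matrix.diagonal D
              + (Matrix.diagonal (fun i => ∑ j, W i j) - W)).mulVec x)
      ↔
    (∀ i : Fin N, ∃ j : Fin N,
        Relation.ReflTransGen (fun k l => k ≠ l ∧ 0 < W k l) i j ∧ 0 < D j) := by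
  classical
  set e : Fin N → Fin N → Prop := fun k l => k ≠ l ∧ 0 < W k l with he
  constructor
  · -- PD → reachability
    intro hPD i
    set x : Fin N → ℝ := fun k => if Relation.ReflTransGen e i k then 1 else 0 with hx
    have hxi : x i = 1 := by simp [hx, Relation.ReflTransGen.refl]
    have hxne : x ≠ 0 := by
      intro h0
      have := congrFun h0 i
      rw [hxi] at this; norm_num at this
    have hpos := hPD x hxne
    rw [quad_form_eq N D W hWsymm] at hpos
    -- the Laplacian part vanishes
    have hzero : ∑ k, ∑ l, W k l * (x k - x l) ^ 2 = 0 := by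
      refine Finset.sum_eq_zero fun k _ => Finset.sum_eq_zero fun l _ => ?_
      rcases eq_or_lt_of_le (hWnonneg k l) with h | h
      · rw [← h]; ring
      · by_cases hkl : k = l
        · subst hkl; simp
        · have hedge : e k l := ⟨hkl, h⟩
          have hedge' : e l k := ⟨Ne.symm hkl, (hWsymm.apply l k) ▸ h⟩
          have : x k = x l := by
            simp only [hx]
            by_cases hr : Relation.ReflTransGen e i k
            · rw [if_pos hr, if_pos (hr.tail hedge)]
            · rw [if_neg hr, if_neg fun hr' => hr (hr'.tail hedge')]
          rw [this]; ring
    rw [hzero, mul_zero, add_zero] at hpos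
    -- some summand is positive
    have : ∃ k, 0 < D k * x k ^ 2 := by
      by_contra hcon
      push_neg at hcon
      have : ∑ k, D k * x k ^ 2 ≤ 0 := Finset.sum_nonpos fun k _ => hcon k
      linarith
    obtain ⟨k, hk⟩ := this
    have hreach : Relation.ReflTransGen e i k := by
      by_contra hr
      simp only [hx, if_neg hr] at hk
      norm_num at hk
    refine ⟨k, hreach, ?_⟩
    simp only [hx, if_pos hreach] at hk
    norm_num at hk
    exact hk
  · -- reachability → PD
    intro hreach x hxne
    rw [quad_form_eq N D W hWsymm]
    have hS1 : ∀ k ∈ Finset.univ (α := Fin N), 0 ≤ D k * x k ^ 2 :=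
      fun k _ => mul_nonneg (hD k) (sq_nonneg _)
    have hS2 : ∀ k ∈ Finset.univ (α := Fin N), 0 ≤ ∑ l, W k l * (x k - x l) ^ 2 :=
      fun k _ => Finset.sum_nonneg fun l _ => mul_nonneg (hWnonneg k l) (sq_nonneg _)
    obtain ⟨i, hxi⟩ : ∃ i, x i ≠ 0 := by
      by_contra h; push_neg at h; exact hxne (funext h)
    obtain ⟨j, hij, hDj⟩ := hreach i
    by_cases hxj : x j = 0
    · -- x not constant along chain: an edge with distinct values
      obtain ⟨k, l, ⟨_, hWkl⟩, hkl⟩ := chain_ne_edge (x := x) hij (show x i ≠ x j by rw [hxj]; exact hxi)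
      have h2 : 0 < ∑ k, ∑ l, W k l * (x k - x l) ^ 2 := by
        refine Finset.sum_pos' hS2 ⟨k, Finset.mem_univ k, ?_⟩
        refine Finset.sum_pos' (fun l _ => mul_nonneg (hWnonneg k l) (sq_nonneg _))
          ⟨l, Finset.mem_univ l, mul_pos hWkl (lt_of_le_of_ne (sq_nonneg _) (Ne.symm (pow_ne_zero 2 (sub_ne_zero.mpr hkl))))⟩
      have h1 : 0 ≤ ∑ k, D k * x k ^ 2 := Finset.sum_nonneg hS1
      linarith
    ·
      have h1 : 0 < ∑ k, D k * x k ^ 2 :=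
        Finset.sum_pos' hS1 ⟨j, Finset.mem_univ j, mul_pos hDj (lt_of_le_of_ne (sq_nonneg _) (Ne.symm (pow_ne_zero 2 hxj)))⟩
      have h2 : 0 ≤ ∑ k, ∑ l, W k l * (x k - x l) ^ 2 := Finset.sum_nonneg hS2
      linarith
end
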